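/- The inclusion c₀^λ(F̂) ⊆ c^λ(F̂) is strict: every element of c₀^λ(F̂) lies in c^λ(F̂), and the sequence x with x_0 = 1 and x_n = f_{n+1}² (∑_{j=1}^{n} 1/(f_j f_{j+1}) + 1) for n ≥ 1 belongs to c^λ(F̂) but not to c₀^λ(F̂). -/

import Mathlib

open Filter Finset

noncomputable def fibR : ℕ → ℝ
  | 0 => 1
  | 1 => 1
  | (n + 2) => fibR (n + 1) + fibR n

noncomputable def Fhat (x : ℕ → ℝ) (n : ℕ) : ℝ :=
  fibR n / fibR (n + 1) * x n - fibR (n + 1) / fibR n * (if n = 0 then 0 else x (n - 1))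

noncomputable def Fbar (Λ : ℕ → ℝ) (x : ℕ → ℝ) (n : ℕ) : ℝ :=
  (1 / Λ n) * ∑ k ∈ Finset.range (n + 1),
    (Λ k - if k = 0 then 0 else Λ (k - 1)) *
      (fibR k / fibR (k + 1) * x k -
        fibR (k + 1) / fibR k * (if k = 0 then 0 else x (k - 1)))

/-! Writing `S n = ∑_{j=1}^n 1/(f_j f_{j+1})`, the sequence is `x n = f_{n+1}² (S n + 1)` for every
`n` (also `n = 0`), so `F̂ x n = f_n f_{n+1} (S n - S (n-1)) = 1` for `n ≥ 1`, and `F̂ x 0 = x 0 = 1`.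
The weights `λ_k - λ_{k-1}` telescope to `λ_n`, hence `F̄_n(x) = 1` for all `n`. -/

lemma fibR_pos : ∀ n, 0 < fibR n
  | 0 => by norm_num [fibR]
  | 1 => by norm_num [fibR]
  | n + 2 => by rw [fibR]; exact add_pos (fibR_pos (n + 1)) (fibR_pos n)

lemma sum_range_sub_prev (Λ : ℕ → ℝ) (n : ℕ) :
    ∑ k ∈ range (n + 1), (Λ k - if k = 0 then 0 else Λ (k - 1)) = Λ n := by
  induction n with
  | zero => simp
  | succ m ih => rw [sum_range_succ, ih]; simp

lemma Fbar_eq_one_of_Fhat_eq_one {Λ x : ℕ → ℝ} (hx : ∀ k, Fhat x k = 1) {n : ℕ}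
    (hΛ : Λ n ≠ 0) : Fbar Λ x n = 1 := by
  have hFbar : Fbar Λ x n =
      1 / Λ n * ∑ k ∈ range (n + 1), (Λ k - if k = 0 then 0 else Λ (k - 1)) * Fhat x k := rfl
  rw [hFbar]
  simp only [hx, mul_one, sum_range_sub_prev, one_div, inv_mul_cancel₀ hΛ]

lemma Fhat_eq_one_of_eq_fibR_sq_mul {x : ℕ → ℝ}
    (hx : ∀ n, x n = fibR (n + 1) ^ 2 * (∑ j ∈ Icc 1 n, 1 / (fibR j * fibR (j + 1)) + 1)) :
    ∀ k, Fhat x k = 1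
  | 0 => by simp [Fhat, hx 0, fibR]
  | n + 1 => by
    have hf₁ := (fibR_pos (n + 1)).ne'
    have hf₂ := (fibR_pos (n + 2)).ne'
    simp only [Fhat, Nat.add_sub_cancel, if_neg n.succ_ne_zero, hx (n + 1), hx n,
      sum_Icc_succ_top (Nat.le_add_left 1 n)]
    field_simp
    ring

theorem c0lambdaF_strict_subset_clambdaF_general (Λ : ℕ → ℝ)
    (hpos : ∀ k, 0 < Λ k) :
    (∀ x : ℕ → ℝ, Tendsto (Fbar Λ x) atTop (nhds 0) →
        ∃ l : ℝ, Tendsto (Fbar Λ x) atTop (nhds l)) ∧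
      (∀ x : ℕ → ℝ, x 0 = 1 →
        (∀ n, 1 ≤ n → x n =
          fibR (n + 1) ^ 2 * (∑ j ∈ Finset.Icc 1 n, 1 / (fibR j * fibR (j + 1)) + 1)) →
        (∃ l : ℝ, Tendsto (Fbar Λ x) atTop (nhds l)) ∧
          ¬ Tendsto (Fbar Λ x) atTop (nhds 0)) := by
  refine ⟨fun x h => ⟨0, h⟩, fun x hx0 hx => ?_⟩
  have hx_all : ∀ n, x n =
      fibR (n + 1) ^ 2 * (∑ j ∈ Icc 1 n, 1 / (fibR j * fibR (j + 1)) + 1) := by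
    rintro (_ | n)
    · simp [hx0, fibR]
    · exact hx _ n.succ_pos
  have hFbar : Fbar Λ x = fun _ => 1 :=
    funext fun n => Fbar_eq_one_of_Fhat_eq_one (Fhat_eq_one_of_eq_fibR_sq_mul hx_all) (hpos n).ne'
  rw [hFbar]
  exact ⟨⟨1, tendsto_const_nhds⟩,
    fun h => one_ne_zero (tendsto_nhds_unique tendsto_const_nhds h)⟩

theorem c0lambdaF_strict_subset_clambdaF (Λ : ℕ → ℝ) (hmono : StrictMono Λ)
    (hpos : ∀ k, 0 < Λ k) (hlim : Tendsto Λ atTop atTop) :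
    (∀ x : ℕ → ℝ, Tendsto (Fbar Λ x) atTop (nhds 0) →
        ∃ l : ℝ, Tendsto (Fbar Λ x) atTop (nhds l)) ∧
      (∀ x : ℕ → ℝ, x 0 = 1 →
        (∀ n, 1 ≤ n → x n =
          fibR (n + 1) ^ 2 * (∑ j ∈ Finset.Icc 1 n, 1 / (fibR j * fibR (j + 1)) + 1)) →
        (∃ l : ℝ, Tendsto (Fbar Λ x) atTop (nhds l)) ∧
          ¬ Tendsto (Fbar Λ x) atTop (nhds 0)) :=
  c0lambdaF_strict_subset_clambdaF_general Λ hpos
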